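/- A linear map f : 𝔥₆ → 𝔥₆ is an automorphism of 𝔥₆ if and only if its matrix in the basis e₁,…,e₆ has the block form ((A, 0), (M, Δ(A))), where A is a 4×4 matrix of the form with rows (r, 0, 0, 0), (x₁, ã₁₁, ã₁₂, 0), (x₂, ã₂₁, ã₂₂, 0), (z, y₁, y₂, s) with r ≠ 0, s ≠ 0 and the 2×2 block Ã = ((ã₁₁, ã₁₂), (ã₂₁, ã₂₂)) invertible, M is an arbitrary 2×4 real matrix, and Δ(A) = r·Ã. -/

import Mathlib

/-!
An automorphism f maps the derived algebra ⟨e₅, e₆⟩ into itself and, being surjective, also the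
centre ⟨e₄, e₅, e₆⟩; moreover f e₅ = [f e₂, f e₁] and f e₆ = [f e₃, f e₁] are determined by the
first three columns. Hence f is block lower triangular with diagonal blocks A₃ (its top-left
3 × 3 block), s = f₄₄ and the 2 × 2 matrix of those 2 × 2 minors of A₃ that contain r = f₁₁,
whose determinant is r · det A₃; so det f = r s (det A₃)². Since [e₂, e₃] = 0, the first entries
of f e₂ and f e₃ are the coefficients of a linear relation between the corresponding columns of
A₃, so they vanish because A₃ is invertible; then det A₃ = r · det Ã.
-/

open Matrix

/-- The Lie bracket of the nilpotent Lie algebra 𝔥₆ = (0,0,0,0,12,13) in the basis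
e₁,…,e₆: the only nonzero brackets among basis vectors are [e₁,e₂] = -e₅ and
[e₁,e₃] = -e₆. -/
def h6bracket (x y : Fin 6 → ℝ) : Fin 6 → ℝ :=
  ![0, 0, 0, 0, -(x 0 * y 1 - x 1 * y 0), -(x 0 * y 2 - x 2 * y 0)]

/-- An automorphism of 𝔥₆, identified with its matrix in the basis e₁,…,e₆. -/
def IsAutH6 (f : Matrix (Fin 6) (Fin 6) ℝ) : Prop :=
  IsUnit f ∧ ∀ x y : Fin 6 → ℝ, f.mulVec (h6bracket x y) = h6bracket (f.mulVec x) (f.mulVec y)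

namespace Matrix

variable {R : Type*} [CommRing R]

theorem det_eq_mul_of_castAdd_natAdd_eq_zero {m n : ℕ} (M : Matrix (Fin (m + n)) (Fin (m + n)) R)
    (h : ∀ i j, M (Fin.castAdd n i) (Fin.natAdd m j) = 0) :
    M.det = (M.submatrix (Fin.castAdd n) (Fin.castAdd n)).det *
      (M.submatrix (Fin.natAdd m) (Fin.natAdd m)).det := by
  have hM : M = (fromBlocks (M.submatrix (Fin.castAdd n) (Fin.castAdd n)) 0
      (M.submatrix (Fin.natAdd m) (Fin.castAdd n))
      (M.submatrix (Fin.natAdd m) (Fin.natAdd m))).submatrix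
      finSumFinEquiv.symm finSumFinEquiv.symm := by
    ext i j
    induction i using Fin.addCases <;> induction j using Fin.addCases <;> simp [h]
  conv_lhs => rw [hM]
  rw [det_submatrix_equiv_self, det_fromBlocks_zero₁₂]

theorem det_fin_six_of_blockTriangular_three_one_two (M : Matrix (Fin 6) (Fin 6) R)
    (h : ∀ i j : Fin 3, M (Fin.castAdd 3 i) (Fin.natAdd 3 j) = 0) (h₃₄ : M 3 4 = 0)
    (h₃₅ : M 3 5 = 0) :
    M.det = (M.submatrix (Fin.castAdd 3) (Fin.castAdd 3)).det *
      (M 3 3 * (M 4 4 * M 5 5 - M 4 5 * M 5 4)) := by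
  rw [det_eq_mul_of_castAdd_natAdd_eq_zero (m := 3) (n := 3) M h,
    det_fin_three (M.submatrix (Fin.natAdd 3 : Fin 3 → Fin 6) (Fin.natAdd 3))]
  simp only [submatrix_apply, Fin.natAdd_eq_addNat, Fin.reduceAddNat, h₃₄, h₃₅]
  ring

/-- `h₁` and `h₂` say that `A 0 1 • A.col 2 = A 0 2 • A.col 1`. -/
theorem apply_zero_one_and_apply_zero_two_eq_zero_of_det_ne_zero [NoZeroDivisors R]
    (A : Matrix (Fin 3) (Fin 3) R) (hA : A.det ≠ 0) (h₁ : A 0 1 * A 1 2 = A 1 1 * A 0 2)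
    (h₂ : A 0 1 * A 2 2 = A 2 1 * A 0 2) :
    A 0 1 = 0 ∧ A 0 2 = 0 := by
  rw [det_fin_three] at hA
  constructor
  · refine (mul_eq_zero.mp ?_).resolve_right hA
    linear_combination (A 0 1 * A 2 0 - A 0 0 * A 2 1) * h₁ + (A 0 0 * A 1 1 - A 0 1 * A 1 0) * h₂
  · refine (mul_eq_zero.mp ?_).resolve_right hA
    linear_combination (A 0 2 * A 2 0 - A 0 0 * A 2 2) * h₁ + (A 0 0 * A 1 2 - A 0 2 * A 1 0) * h₂

end Matrix

theorem h6bracket_single_zero_single_one :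
    h6bracket (Pi.single 0 1) (Pi.single 1 1) = -Pi.single 4 1 := by
  ext k; fin_cases k <;> simp [h6bracket]

theorem h6bracket_single_zero_single_two :
    h6bracket (Pi.single 0 1) (Pi.single 2 1) = -Pi.single 5 1 := by
  ext k; fin_cases k <;> simp [h6bracket]

theorem h6bracket_single_one_single_two : h6bracket (Pi.single 1 1) (Pi.single 2 1) = 0 := by
  ext k; fin_cases k <;> simp [h6bracket]

theorem forall_h6bracket_eq_zero_iff {x : Fin 6 → ℝ} :
    (∀ y, h6bracket x y = 0) ↔ x 0 = 0 ∧ x 1 = 0 ∧ x 2 = 0 := by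
  refine ⟨fun h => ⟨?_, ?_, ?_⟩, fun ⟨h₀, h₁, h₂⟩ y => by simp [h6bracket, h₀, h₁, h₂]⟩
  · simpa [h6bracket] using congrFun (h (Pi.single 1 1)) 4
  · simpa [h6bracket] using congrFun (h (Pi.single 0 1)) 4
  · simpa [h6bracket] using congrFun (h (Pi.single 0 1)) 5

def h6AutMatrix (r s x₁ x₂ z y₁ y₂ a₁₁ a₁₂ a₂₁ a₂₂ : ℝ) (M : Matrix (Fin 2) (Fin 4) ℝ) :
    Matrix (Fin 6) (Fin 6) ℝ :=
  !![r, 0, 0, 0, 0, 0;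
     x₁, a₁₁, a₁₂, 0, 0, 0;
     x₂, a₂₁, a₂₂, 0, 0, 0;
     z, y₁, y₂, s, 0, 0;
     M 0 0, M 0 1, M 0 2, M 0 3, r * a₁₁, r * a₁₂;
     M 1 0, M 1 1, M 1 2, M 1 3, r * a₂₁, r * a₂₂]

theorem det_h6AutMatrix (r s x₁ x₂ z y₁ y₂ a₁₁ a₁₂ a₂₁ a₂₂ : ℝ) (M : Matrix (Fin 2) (Fin 4) ℝ) :
    (h6AutMatrix r s x₁ x₂ z y₁ y₂ a₁₁ a₁₂ a₂₁ a₂₂ M).det =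
      r ^ 3 * s * (a₁₁ * a₂₂ - a₁₂ * a₂₁) ^ 2 := by
  rw [det_fin_six_of_blockTriangular_three_one_two _
    (fun i j => by fin_cases i <;> fin_cases j <;> rfl) rfl rfl, det_fin_three]
  simp only [h6AutMatrix, Fin.isValue, submatrix_apply, Fin.reduceCastAdd, of_apply, cons_val',
    cons_val_zero, cons_val_fin_one, cons_val_one, cons_val, zero_mul, sub_zero, add_zero]
  ring

theorem isAutH6_h6AutMatrix {r s a₁₁ a₁₂ a₂₁ a₂₂ : ℝ} (x₁ x₂ z y₁ y₂ : ℝ)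
    (M : Matrix (Fin 2) (Fin 4) ℝ) (hr : r ≠ 0) (hs : s ≠ 0) (ha : a₁₁ * a₂₂ - a₁₂ * a₂₁ ≠ 0) :
    IsAutH6 (h6AutMatrix r s x₁ x₂ z y₁ y₂ a₁₁ a₁₂ a₂₁ a₂₂ M) := by
  refine ⟨?_, fun x y => ?_⟩
  · rw [isUnit_iff_isUnit_det, det_h6AutMatrix, isUnit_iff_ne_zero]
    positivity
  · ext i
    fin_cases i <;> simp [h6AutMatrix, h6bracket, mulVec, dotProduct, Fin.sum_univ_six] <;> ring

namespace IsAutH6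

variable {f : Matrix (Fin 6) (Fin 6) ℝ}

theorem mulVec_h6bracket_single (hf : IsAutH6 f) (i j : Fin 6) :
    f *ᵥ h6bracket (Pi.single i 1) (Pi.single j 1) = h6bracket (f.col i) (f.col j) := by
  rw [hf.2, mulVec_single_one, mulVec_single_one]

theorem col_four (hf : IsAutH6 f) :
    f.col 4 = ![0, 0, 0, 0, f 0 0 * f 1 1 - f 1 0 * f 0 1, f 0 0 * f 2 1 - f 2 0 * f 0 1] := by
  rw [← neg_neg (f.col 4), ← mulVec_single_one, ← mulVec_neg, ← h6bracket_single_zero_single_one,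
    hf.mulVec_h6bracket_single]
  ext k; fin_cases k <;> simp [h6bracket]

theorem col_five (hf : IsAutH6 f) :
    f.col 5 = ![0, 0, 0, 0, f 0 0 * f 1 2 - f 1 0 * f 0 2, f 0 0 * f 2 2 - f 2 0 * f 0 2] := by
  rw [← neg_neg (f.col 5), ← mulVec_single_one, ← mulVec_neg, ← h6bracket_single_zero_single_two,
    hf.mulVec_h6bracket_single]
  ext k; fin_cases k <;> simp [h6bracket]

theorem h6bracket_col_one_col_two (hf : IsAutH6 f) : h6bracket (f.col 1) (f.col 2) = 0 := by
  rw [← hf.mulVec_h6bracket_single, h6bracket_single_one_single_two, mulVec_zero]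

theorem h6bracket_mulVec_eq_zero (hf : IsAutH6 f) {x : Fin 6 → ℝ} (hx : ∀ y, h6bracket x y = 0)
    (y : Fin 6 → ℝ) : h6bracket (f *ᵥ x) y = 0 := by
  obtain ⟨g, hfg, -⟩ := isUnit_iff_exists.mp hf.1
  rw [← one_mulVec y, ← hfg, ← mulVec_mulVec, ← hf.2, hx, mulVec_zero]

theorem col_three (hf : IsAutH6 f) : f 0 3 = 0 ∧ f 1 3 = 0 ∧ f 2 3 = 0 := by
  have h := hf.h6bracket_mulVec_eq_zero (x := Pi.single 3 1)
    (forall_h6bracket_eq_zero_iff.mpr (by simp))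
  rwa [mulVec_single_one, forall_h6bracket_eq_zero_iff] at h

theorem det_eq (hf : IsAutH6 f) :
    f.det = f 0 0 * f 3 3 * (f.submatrix (Fin.castAdd 3) (Fin.castAdd 3)).det ^ 2 := by
  have h₄ := congrFun hf.col_four
  have h₅ := congrFun hf.col_five
  obtain ⟨h₀₃, h₁₃, h₂₃⟩ := hf.col_three
  simp only [col_apply] at h₄ h₅
  rw [det_fin_six_of_blockTriangular_three_one_two f (fun i j => by
      fin_cases i <;> fin_cases j <;> simp [h₀₃, h₁₃, h₂₃, h₄, h₅]) (h₄ 3) (h₅ 3),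
    h₄ 4, h₄ 5, h₅ 4, h₅ 5, det_fin_three]
  simp only [Fin.isValue, submatrix_apply, Fin.reduceCastAdd, Nat.succ_eq_add_one, Nat.reduceAdd,
    cons_val]
  ring

theorem apply_ne_zero_and_det_ne_zero (hf : IsAutH6 f) :
    f 0 0 ≠ 0 ∧ f 3 3 ≠ 0 ∧ (f.submatrix (Fin.castAdd 3) (Fin.castAdd 3)).det ≠ 0 := by
  simpa [not_or, and_assoc, hf.det_eq] using ((isUnit_iff_isUnit_det f).mp hf.1).ne_zero

theorem apply_zero_one_and_apply_zero_two_eq_zero (hf : IsAutH6 f) :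
    f 0 1 = 0 ∧ f 0 2 = 0 := by
  have h₄ := congrFun hf.h6bracket_col_one_col_two 4
  have h₅ := congrFun hf.h6bracket_col_one_col_two 5
  simp only [h6bracket, Fin.isValue, col_apply, neg_sub, cons_val, Pi.zero_apply] at h₄ h₅
  exact apply_zero_one_and_apply_zero_two_eq_zero_of_det_ne_zero _
    hf.apply_ne_zero_and_det_ne_zero.2.2 (sub_eq_zero.mp h₄).symm (sub_eq_zero.mp h₅).symm

theorem exists_eq_h6AutMatrix (hf : IsAutH6 f) :
    ∃ (r s x₁ x₂ z y₁ y₂ a₁₁ a₁₂ a₂₁ a₂₂ : ℝ) (M : Matrix (Fin 2) (Fin 4) ℝ),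
      r ≠ 0 ∧ s ≠ 0 ∧ a₁₁ * a₂₂ - a₁₂ * a₂₁ ≠ 0 ∧
        f = h6AutMatrix r s x₁ x₂ z y₁ y₂ a₁₁ a₁₂ a₂₁ a₂₂ M := by
  obtain ⟨h₀₀, h₃₃, hA⟩ := hf.apply_ne_zero_and_det_ne_zero
  obtain ⟨h₀₁, h₀₂⟩ := hf.apply_zero_one_and_apply_zero_two_eq_zero
  obtain ⟨h₀₃, h₁₃, h₂₃⟩ := hf.col_three
  have h₄ := congrFun hf.col_four
  have h₅ := congrFun hf.col_five
  simp only [col_apply] at h₄ h₅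
  have hÃ : f 1 1 * f 2 2 - f 1 2 * f 2 1 ≠ 0 := by
    intro h
    apply hA
    simp only [det_fin_three, submatrix_apply, Fin.reduceCastAdd, h₀₁, h₀₂]
    linear_combination f 0 0 * h
  refine ⟨f 0 0, f 3 3, f 1 0, f 2 0, f 3 0, f 3 1, f 3 2, f 1 1, f 1 2, f 2 1, f 2 2,
    of ![![f 4 0, f 4 1, f 4 2, f 4 3], ![f 5 0, f 5 1, f 5 2, f 5 3]], h₀₀, h₃₃, hÃ, ?_⟩
  ext i j
  fin_cases i <;> fin_cases j <;> simp [h6AutMatrix, h₀₁, h₀₂, h₀₃, h₁₃, h₂₃, h₄, h₅]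

end IsAutH6

/-- Theorem 4.4: a linear map f is an automorphism of 𝔥₆ if and only if, in the basis
e₁,…,e₆, it has the block form ((A, 0), (M, Δ(A))) where A is the 4×4 matrix with rows
(r,0,0,0), (x₁,ã₁₁,ã₁₂,0), (x₂,ã₂₁,ã₂₂,0), (z,y₁,y₂,s), with r ≠ 0, s ≠ 0, the 2×2
block Ã invertible, M an arbitrary 2×4 matrix, and Δ(A) = r·Ã. -/
theorem aut_h6_iff_block_form (f : Matrix (Fin 6) (Fin 6) ℝ) :
    IsAutH6 f ↔
      ∃ (r s x₁ x₂ z y₁ y₂ a₁₁ a₁₂ a₂₁ a₂₂ : ℝ) (M : Matrix (Fin 2) (Fin 4) ℝ),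
        r ≠ 0 ∧ s ≠ 0 ∧ a₁₁ * a₂₂ - a₁₂ * a₂₁ ≠ 0 ∧
        f = !![r, 0, 0, 0, 0, 0;
               x₁, a₁₁, a₁₂, 0, 0, 0;
               x₂, a₂₁, a₂₂, 0, 0, 0;
               z, y₁, y₂, s, 0, 0;
               M 0 0, M 0 1, M 0 2, M 0 3, r * a₁₁, r * a₁₂;
               M 1 0, M 1 1, M 1 2, M 1 3, r * a₂₁, r * a₂₂] := by
  refine ⟨IsAutH6.exists_eq_h6AutMatrix, ?_⟩
  rintro ⟨r, s, x₁, x₂, z, y₁, y₂, a₁₁, a₁₂, a₂₁, a₂₂, M, hr, hs, ha, rfl⟩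
  exact isAutH6_h6AutMatrix x₁ x₂ z y₁ y₂ M hr hs ha
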